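/- (Thrall's identity, equation (6).) In ℚ[[x,y]] one has ((1−x²)(1−xy)(1−y²))^{-1} = Σ_{j≥0} Σ_{k≥0} S_{(2j+2k, 2k)}(x,y). Equivalently, the multiplicity series of the symmetric function ((1−x²)(1−xy)(1−y²))^{-1} is ((1−t²)(1−v²))^{-1}, i.e. the multiplicity of S_{(λ1,λ2)} is 1 if λ2 and λ1−λ2 are both even, and 0 otherwise. -/

import Mathlib

open Finset

abbrev Q2 : Type := MvPowerSeries (Fin 2) ℚ

noncomputable def Xv (i : Fin 2) : Q2 := MvPowerSeries.X i

noncomputable def mon (i j : ℕ) : Fin 2 →₀ ℕ := Finsupp.single 0 i + Finsupp.single 1 j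

noncomputable def c (i j : ℕ) (f : Q2) : ℚ := MvPowerSeries.coeff (mon i j) f

/-- Schur function S_{(l1,l2)}(x,y) for l1 ≥ l2. -/
noncomputable def schur (l1 l2 : ℕ) : Q2 :=
  (Xv 0 * Xv 1) ^ l2 * ∑ i ∈ range (l1 - l2 + 1), Xv 0 ^ i * Xv 1 ^ (l1 - l2 - i)

/-- f = Σ_{l1 ≥ l2 ≥ 0} m(l1,l2) · S_{(l1,l2)}, expressed coefficientwise
(each coefficient receives only finitely many contributions, since `schur l1 l2`
is homogeneous of degree `l1 + l2`). -/
def IsSchurExpansion (m : ℕ → ℕ → ℚ) (f : Q2) : Prop :=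
  ∀ i j : ℕ, c i j f =
    ∑ l1 ∈ range (i + j + 1), ∑ l2 ∈ range (l1 + 1), m l1 l2 * c i j (schur l1 l2)

/-- h(t,v) = Σ_{l1 ≥ l2 ≥ 0} m(l1,l2) t^{l1-l2} v^{l2}, the multiplicity series. -/
def IsMultSeries (m : ℕ → ℕ → ℚ) (h : Q2) : Prop :=
  ∀ p q : ℕ, c p q h = m (p + q) q

/-- Substitution of φ0, φ1 (series with zero constant term) for the two variables of h:
the coefficient of a monomial e in h(φ0,φ1) only receives contributions from monomials
t^p v^q of h with p + q ≤ |e|. -/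
noncomputable def subst2 (φ0 φ1 h : Q2) : Q2 :=
  fun e => ∑ p ∈ range (e 0 + e 1 + 1), ∑ q ∈ range (e 0 + e 1 + 1),
    MvPowerSeries.coeff (mon p q) h * MvPowerSeries.coeff e (φ0 ^ p * φ1 ^ q)

/-- Substitution of a series φ with zero constant term into a one-variable series a. -/
noncomputable def substP (φ : Q2) (a : PowerSeries ℚ) : Q2 :=
  fun e => ∑ k ∈ range (e 0 + e 1 + 1),
    PowerSeries.coeff k a * MvPowerSeries.coeff e (φ ^ k)

/-! The inverse has coefficient `⌊min i j / 2⌋ + 1` at `x^i y^j` when `i ≡ j [MOD 2]` and `0`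
otherwise: multiplying this series by `1 - y²` leaves the indicator of `j ≤ i, i ≡ j [MOD 2]`,
multiplying that by `1 - xy` leaves the indicator of the even powers of `x`, and `1 - x²` kills
those. On the Schur side, `x^i y^j` occurs (once) in `S_{(l₁,l₂)}` exactly when `i + j = l₁ + l₂`
and `l₂ ≤ min i j`; in the double sum `J` is then determined by `K`, and `K` runs over
`2K ≤ min i j`, which gives the same count. -/

lemma mon_apply_zero (i j : ℕ) : mon i j 0 = i := by
  simp [mon]

lemma mon_apply_one (i j : ℕ) : mon i j 1 = j := by
  simp [mon]

lemma mon_apply_zero_apply_one (e : Fin 2 →₀ ℕ) : mon (e 0) (e 1) = e := by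
  ext a
  fin_cases a <;> simp [mon_apply_zero, mon_apply_one]

lemma mon_inj {a b i j : ℕ} : mon a b = mon i j ↔ a = i ∧ b = j := by
  refine ⟨fun h => ⟨?_, ?_⟩, fun ⟨ha, hb⟩ => ha ▸ hb ▸ rfl⟩
  · simpa [mon_apply_zero] using DFunLike.congr_fun h 0
  · simpa [mon_apply_one] using DFunLike.congr_fun h 1

lemma mon_eq_zero_iff {i j : ℕ} : mon i j = 0 ↔ i = 0 ∧ j = 0 := by
  rw [show (0 : Fin 2 →₀ ℕ) = mon 0 0 by simp [mon], mon_inj]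

lemma mon_le_mon_iff {a b i j : ℕ} : mon a b ≤ mon i j ↔ a ≤ i ∧ b ≤ j := by
  refine ⟨fun h => ⟨?_, ?_⟩, fun ⟨ha, hb⟩ k => ?_⟩
  · simpa [mon_apply_zero] using h 0
  · simpa [mon_apply_one] using h 1
  · fin_cases k <;> simpa [mon_apply_zero, mon_apply_one]

lemma mon_sub_mon (a b i j : ℕ) : mon i j - mon a b = mon (i - a) (j - b) := by
  ext k
  fin_cases k <;> simp [mon_apply_zero, mon_apply_one]

lemma Q2_ext {f g : Q2} (h : ∀ i j, c i j f = c i j g) : f = g := by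
  ext e
  rw [← mon_apply_zero_apply_one e]
  exact h _ _

lemma Xv_pow_mul_Xv_pow (a b : ℕ) : Xv 0 ^ a * Xv 1 ^ b = MvPowerSeries.monomial (mon a b) 1 := by
  rw [Xv, Xv, MvPowerSeries.X_pow_eq, MvPowerSeries.X_pow_eq,
    MvPowerSeries.monomial_mul_monomial, one_mul, mon]

lemma c_one (i j : ℕ) : c i j 1 = if i = 0 ∧ j = 0 then 1 else 0 := by
  simp only [c, MvPowerSeries.coeff_one, mon_eq_zero_iff]

def ofCoeff (f : ℕ → ℕ → ℚ) : Q2 := fun e => f (e 0) (e 1)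

lemma c_ofCoeff (f : ℕ → ℕ → ℚ) (i j : ℕ) : c i j (ofCoeff f) = f i j := by
  simp only [c, ofCoeff, MvPowerSeries.coeff_apply, mon_apply_zero, mon_apply_one]

lemma c_one_sub_monomial_mul_ofCoeff (a b : ℕ) (f : ℕ → ℕ → ℚ) (i j : ℕ) :
    c i j ((1 - MvPowerSeries.monomial (mon a b) 1) * ofCoeff f)
      = f i j - if a ≤ i ∧ b ≤ j then f (i - a) (j - b) else 0 := by
  rw [sub_mul, one_mul, c, map_sub, MvPowerSeries.coeff_monomial_mul]
  simp only [mon_le_mon_iff, mon_sub_mon, one_mul, ofCoeff, MvPowerSeries.coeff_apply,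
    mon_apply_zero, mon_apply_one]

def thrallCoeff (i j : ℕ) : ℚ := if i % 2 = j % 2 then (min i j / 2 + 1 : ℕ) else 0

def lowerParityIndicator (i j : ℕ) : ℚ := if j ≤ i ∧ i % 2 = j % 2 then 1 else 0

def evenAxisIndicator (i j : ℕ) : ℚ := if j = 0 ∧ i % 2 = 0 then 1 else 0

lemma one_sub_Xv_one_sq_mul_thrallCoeff :
    (1 - Xv 1 ^ 2) * ofCoeff thrallCoeff = ofCoeff lowerParityIndicator := by
  refine Q2_ext fun i j => ?_
  rw [← one_mul (Xv 1 ^ 2), ← pow_zero (Xv 0), Xv_pow_mul_Xv_pow, pow_zero,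
    c_one_sub_monomial_mul_ofCoeff, c_ofCoeff]
  simp only [thrallCoeff, lowerParityIndicator]
  split_ifs <;> first | omega | (norm_num; done) | (rw [sub_eq_iff_eq_add]; norm_cast; omega)

lemma one_sub_Xv_zero_mul_Xv_one_mul_lowerParityIndicator :
    (1 - Xv 0 * Xv 1) * ofCoeff lowerParityIndicator = ofCoeff evenAxisIndicator := by
  refine Q2_ext fun i j => ?_
  rw [← pow_one (Xv 0), ← pow_one (Xv 1), Xv_pow_mul_Xv_pow,
    c_one_sub_monomial_mul_ofCoeff, c_ofCoeff]
  simp only [lowerParityIndicator, evenAxisIndicator]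
  split_ifs <;> first | omega | norm_num

lemma one_sub_Xv_zero_sq_mul_evenAxisIndicator :
    (1 - Xv 0 ^ 2) * ofCoeff evenAxisIndicator = 1 := by
  refine Q2_ext fun i j => ?_
  rw [← mul_one (Xv 0 ^ 2), ← pow_zero (Xv 1), Xv_pow_mul_Xv_pow, pow_zero,
    c_one_sub_monomial_mul_ofCoeff, c_one]
  simp only [evenAxisIndicator]
  split_ifs <;> first | omega | norm_num

lemma inv_eq_ofCoeff_thrallCoeff :
    ((1 - Xv 0 ^ 2) * (1 - Xv 0 * Xv 1) * (1 - Xv 1 ^ 2))⁻¹ = ofCoeff thrallCoeff := by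
  refine (MvPowerSeries.inv_eq_iff_mul_eq_one (by simp [Xv])).mpr ?_
  calc ofCoeff thrallCoeff * ((1 - Xv 0 ^ 2) * (1 - Xv 0 * Xv 1) * (1 - Xv 1 ^ 2))
      = (1 - Xv 0 ^ 2) * ((1 - Xv 0 * Xv 1) * ((1 - Xv 1 ^ 2) * ofCoeff thrallCoeff)) := by
        ring
    _ = 1 := by
      rw [one_sub_Xv_one_sq_mul_thrallCoeff, one_sub_Xv_zero_mul_Xv_one_mul_lowerParityIndicator,
        one_sub_Xv_zero_sq_mul_evenAxisIndicator]

lemma c_schur {l1 l2 : ℕ} (h : l2 ≤ l1) (i j : ℕ) :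
    c i j (schur l1 l2) = if i + j = l1 + l2 ∧ l2 ≤ i ∧ l2 ≤ j then 1 else 0 := by
  have hterm (t : ℕ) : (Xv 0 * Xv 1) ^ l2 * (Xv 0 ^ t * Xv 1 ^ (l1 - l2 - t))
      = MvPowerSeries.monomial (mon (l2 + t) (l2 + (l1 - l2 - t))) 1 := by
    rw [← Xv_pow_mul_Xv_pow]
    ring
  rw [schur, Finset.mul_sum, c, map_sum]
  simp only [hterm, MvPowerSeries.coeff_monomial, mon_inj]
  split_ifs with hc
  · rw [Finset.sum_eq_single_of_mem (i - l2) (mem_range.mpr (by omega)) fun t _ ht => ?_]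
    · rw [if_pos (by omega)]
    · rw [if_neg (by omega)]
  · exact Finset.sum_eq_zero fun t ht => if_neg (by have := mem_range.mp ht; omega)

lemma sum_c_schur (i j K : ℕ) :
    ∑ J ∈ range (i + j + 1), c i j (schur (2 * J + 2 * K) (2 * K))
      = if (i + j) % 2 = 0 ∧ 2 * K ≤ i ∧ 2 * K ≤ j then 1 else 0 := by
  rw [Finset.sum_congr rfl fun J _ => c_schur (by omega) i j]
  split_ifs with hc
  · rw [Finset.sum_eq_single_of_mem ((i + j - 4 * K) / 2) (mem_range.mpr (by omega))
      fun J _ hJ => if_neg (by omega)]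
    exact if_pos (by omega)
  · exact Finset.sum_eq_zero fun J _ => if_neg (by omega)

lemma sum_sum_c_schur (i j : ℕ) :
    ∑ J ∈ range (i + j + 1), ∑ K ∈ range (i + j + 1), c i j (schur (2 * J + 2 * K) (2 * K))
      = thrallCoeff i j := by
  rw [Finset.sum_comm]
  simp only [sum_c_schur, thrallCoeff]
  split_ifs with hp
  · have hfilter : {K ∈ range (i + j + 1) | (i + j) % 2 = 0 ∧ 2 * K ≤ i ∧ 2 * K ≤ j}
        = range (min i j / 2 + 1) := by
      ext K
      simp only [mem_filter, mem_range]
      omega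
    rw [Finset.sum_boole, hfilter, card_range]
  · exact Finset.sum_eq_zero fun K _ => if_neg (by omega)

/-- Thrall's identity, equation (6):
((1−x²)(1−xy)(1−y²))⁻¹ = Σ_{j≥0} Σ_{k≥0} S_{(2j+2k, 2k)}(x,y),
expressed coefficientwise (terms with j > i₁+i₂ or k > i₁+i₂ contribute 0, since
`schur (2j+2k) (2k)` is homogeneous of degree 2j+4k). -/
theorem thrall_identity :
    ∀ i j : ℕ,
      c i j (((1 - Xv 0 ^ 2) * (1 - Xv 0 * Xv 1) * (1 - Xv 1 ^ 2))⁻¹)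
        = ∑ J ∈ range (i + j + 1), ∑ K ∈ range (i + j + 1),
            c i j (schur (2 * J + 2 * K) (2 * K)) := by
  intro i j
  rw [inv_eq_ofCoeff_thrallCoeff, c_ofCoeff, sum_sum_c_schur]
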